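/- arXiv:2106.14965 — 6 statements merged into one kernel-verified Lean document; each statement's English description precedes it below -/
import Mathlib

section
/- Let E be a real normed vector space, let A ⊆ E \ {0} be an open cone, let L : A → ℝ be continuous, and let T ⊆ A be a nonempty open connected cone such that L(v) > 0 for all v ∈ T and L(v) = 0 for every v ∈ A ∩ frontier(T). Then T is a connected component of the set {v ∈ A | L(v) > 0}; equivalently, for every v₀ ∈ T, T equals the connected component of v₀ in {v ∈ A | L(v) > 0}. -/
/-- If `T` is a nonempty open connected cone contained in the open cone
`A ⊆ E \ {0}`, `L` is continuous on `A`, positive on `T`, and vanishes on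
`A ∩ frontier T`, then `T` is a connected component of `{v ∈ A | 0 < L v}`. -/
theorem timelike_cone_is_connected_component
    {E : Type*} [NormedAddCommGroup E] [NormedSpace ℝ E]
    (A T : Set E) (L : E → ℝ)
    (hA0 : (0 : E) ∉ A) (hAopen : IsOpen A)
    (hAcone : ∀ v ∈ A, ∀ α : ℝ, 0 < α → α • v ∈ A)
    (hL : ContinuousOn L A)
    (hTA : T ⊆ A) (hTopen : IsOpen T) (hTconn : IsConnected T)
    (hTcone : ∀ v ∈ T, ∀ α : ℝ, 0 < α → α • v ∈ T)
    (hpos : ∀ v ∈ T, 0 < L v)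
    (hbd : ∀ v ∈ A ∩ frontier T, L v = 0) :
    ∀ v₀ ∈ T, T = connectedComponentIn {v ∈ A | 0 < L v} v₀ := by
  intro v₀ hv₀
  set S : Set E := {v ∈ A | 0 < L v} with hS
  have hTS : T ⊆ S := fun v hv => ⟨hTA hv, hpos v hv⟩
  -- every point of S in the closure of T lies in T
  have hkey : S ⊆ T ∪ (closure T)ᶜ := by
    intro v hv
    by_cases hc : v ∈ closure T
    · left
      by_contra hvT
      have hfr : v ∈ frontier T := by
        rw [frontier, hTopen.interior_eq]
        exact ⟨hc, hvT⟩
      have := hbd v ⟨hv.1, hfr⟩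
      exact absurd hv.2 (by simp [this])
    · exact Or.inr hc
  apply Set.Subset.antisymm
  · exact hTconn.isPreconnected.subset_connectedComponentIn hv₀ hTS
  · have hCsub : connectedComponentIn S v₀ ⊆ S := connectedComponentIn_subset S v₀
    have hCconn : IsPreconnected (connectedComponentIn S v₀) :=
      (isPreconnected_connectedComponentIn)
    have := hCconn.subset_left_of_subset_union hTopen
      (isOpen_compl_iff.mpr isClosed_closure)
      (Set.disjoint_left.mpr fun x hxT hxc => hxc (subset_closure hxT))
      (fun x hx => hkey (hCsub hx))
      ⟨v₀, mem_connectedComponentIn (hTS hv₀), hv₀⟩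
    exact this
end

section
/- Let E be a real normed vector space, let T ⊆ E \ {0} be a nonempty connected cone, and let L : T → ℝ be continuous, positively 2-homogeneous, and satisfy L(v) > 0 for all v ∈ T. Then the set O := {v ∈ T | L(v) = 1} is nonempty and connected. -/
/-- On a nonempty connected cone `T ⊆ E \ {0}` carrying a continuous, positively
2-homogeneous, positive function `L`, the set `O = {v ∈ T | L v = 1}` is
nonempty and connected. -/
theorem observer_space_connected
    {E : Type*} [NormedAddCommGroup E] [NormedSpace ℝ E]
    (T : Set E) (L : E → ℝ)
    (hT0 : (0 : E) ∉ T)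
    (hTconn : IsConnected T)
    (hTcone : ∀ v ∈ T, ∀ α : ℝ, 0 < α → α • v ∈ T)
    (hL : ContinuousOn L T)
    (hhom : ∀ v ∈ T, ∀ α : ℝ, 0 < α → L (α • v) = α ^ 2 * L v)
    (hpos : ∀ v ∈ T, 0 < L v) :
    IsConnected {v ∈ T | L v = 1} := by
  set r : E → E := fun v => (Real.sqrt (L v))⁻¹ • v with hr
  have hαpos : ∀ v ∈ T, 0 < (Real.sqrt (L v))⁻¹ := fun v hv =>
    inv_pos.mpr (Real.sqrt_pos.mpr (hpos v hv))
  have himg : r '' T = {v ∈ T | L v = 1} := by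
    ext v
    constructor
    · rintro ⟨w, hw, rfl⟩
      have hα := hαpos w hw
      refine ⟨hTcone w hw _ hα, ?_⟩
      rw [hhom w hw _ hα]
      have hs : Real.sqrt (L w) ^ 2 = L w := Real.sq_sqrt (hpos w hw).le
      field_simp
      rw [hs]
      exact div_self (hpos w hw).ne'
    · rintro ⟨hv, hv1⟩
      exact ⟨v, hv, by simp [hr, hv1]⟩
  rw [← himg]
  refine hTconn.image r ?_
  apply ContinuousOn.smul
  · exact (Real.continuous_sqrt.comp_continuousOn hL).inv₀
      (fun v hv => (Real.sqrt_pos.mpr (hpos v hv)).ne')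
  · exact continuousOn_id
end

section
/- Let E be a real normed vector space, let A ⊆ E \ {0} be an open cone, let L : A → ℝ be continuous and positively 2-homogeneous, and let T ⊆ A be a nonempty open connected cone such that L(v) > 0 for all v ∈ T and L(v) = 0 for every v ∈ A ∩ frontier(T). Then O := {v ∈ T | L(v) = 1} is a connected component of the indicatrix I := {v ∈ A | L(v) = 1}; equivalently, for every v₀ ∈ O, O equals the connected component of v₀ in I. -/
/-- The observer space `O = {v ∈ T | L v = 1}` is a connected component of the
indicatrix `I = {v ∈ A | L v = 1}`, for a nonempty open connected cone `T`
inside the open cone `A ⊆ E \ {0}`, with `L` continuous and positively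
2-homogeneous on `A`, positive on `T` and vanishing on `A ∩ frontier T`. -/
theorem observer_space_is_component_of_indicatrix
    {E : Type*} [NormedAddCommGroup E] [NormedSpace ℝ E]
    (A T : Set E) (L : E → ℝ)
    (hA0 : (0 : E) ∉ A) (hAopen : IsOpen A)
    (hAcone : ∀ v ∈ A, ∀ α : ℝ, 0 < α → α • v ∈ A)
    (hL : ContinuousOn L A)
    (hhom : ∀ v ∈ A, ∀ α : ℝ, 0 < α → L (α • v) = α ^ 2 * L v)
    (hTA : T ⊆ A) (hTopen : IsOpen T) (hTconn : IsConnected T)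
    (hTcone : ∀ v ∈ T, ∀ α : ℝ, 0 < α → α • v ∈ T)
    (hpos : ∀ v ∈ T, 0 < L v)
    (hbd : ∀ v ∈ A ∩ frontier T, L v = 0) :
    ∀ v₀ ∈ {v ∈ T | L v = 1},
      {v ∈ T | L v = 1} = connectedComponentIn {v ∈ A | L v = 1} v₀ := by
  intro v₀ hv₀
  obtain ⟨hv₀T, hv₀L⟩ := hv₀
  set O : Set E := {v ∈ T | L v = 1} with hO
  set I : Set E := {v ∈ A | L v = 1} with hI
  have hv₀I : v₀ ∈ I := ⟨hTA hv₀T, hv₀L⟩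
  -- the retraction onto the indicatrix
  set r : E → E := fun v => (Real.sqrt (L v))⁻¹ • v with hr
  have hmaps : ∀ v ∈ T, r v ∈ O := by
    intro v hv
    have hLv := hpos v hv
    have hs : 0 < Real.sqrt (L v) := Real.sqrt_pos.mpr hLv
    have hα : (0 : ℝ) < (Real.sqrt (L v))⁻¹ := inv_pos.mpr hs
    refine ⟨hTcone v hv _ hα, ?_⟩
    have := hhom v (hTA hv) _ hα
    rw [hr]
    simp only [this]
    rw [inv_pow, Real.sq_sqrt hLv.le]
    field_simp
  have hfix : ∀ v ∈ O, r v = v := by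
    intro v hv
    rw [hr]
    simp [hv.2]
  have himg : O = r '' T := by
    apply Set.Subset.antisymm
    · intro v hv
      exact ⟨v, hv.1, hfix v hv⟩
    · rintro _ ⟨v, hv, rfl⟩
      exact hmaps v hv
  have hrcont : ContinuousOn r T := by
    apply ContinuousOn.smul
    · apply ContinuousOn.inv₀
      · exact Real.continuous_sqrt.comp_continuousOn (hL.mono hTA)
      · intro v hv
        exact (Real.sqrt_pos.mpr (hpos v hv)).ne'
    · exact continuousOn_id
  have hOconn : IsConnected O := himg ▸ hTconn.image r hrcont
  have hOI : O ⊆ I := fun v hv => ⟨hTA hv.1, hv.2⟩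
  -- I avoids the frontier of T
  have hIsplit : I ⊆ T ∪ (closure T)ᶜ := by
    intro v hv
    by_cases hvT : v ∈ T
    · exact Or.inl hvT
    · right
      intro hvc
      have hfr : v ∈ frontier T := by
        rw [frontier, hTopen.interior_eq]
        exact ⟨hvc, hvT⟩
      have := hbd v ⟨hv.1, hfr⟩
      rw [hv.2] at this
      norm_num at this
  apply Set.Subset.antisymm
  · exact hOconn.isPreconnected.subset_connectedComponentIn ⟨hv₀T, hv₀L⟩ hOI
  · have hC : IsPreconnected (connectedComponentIn I v₀) :=
      (isConnected_connectedComponentIn_iff.mpr hv₀I).isPreconnected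
    have hCI : connectedComponentIn I v₀ ⊆ I := connectedComponentIn_subset I v₀
    have hCT : connectedComponentIn I v₀ ⊆ T := by
      apply hC.subset_left_of_subset_union hTopen isClosed_closure.isOpen_compl
        (disjoint_compl_right.mono_left subset_closure)
        (hCI.trans hIsplit)
      exact ⟨v₀, mem_connectedComponentIn hv₀I, hv₀T⟩
    intro v hv
    exact ⟨hCT hv, (hCI hv).2⟩
end

section
/- Let E and F be real normed vector spaces and let k ∈ ℝ. Let G be the multiplicative group of positive real numbers acting on X := (E \ {0}) × F by α · (v, w) = (α • v, α^k • w) (where α^k is the real power). Then: (i) the action is free, i.e., if α · (v, w) = (v, w) for some (v, w) ∈ X then α = 1; and (ii) the action is proper, i.e., the map G × X → X × X, (α, p) ↦ (α · p, p), is a proper map (it is continuous and the preimage of every compact set is compact). -/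
/-- The action of the multiplicative group of positive reals on
`(E \ {0}) × F` by `α · (v, w) = (α • v, α^k • w)`, where `α^k` is the real
power. -/
noncomputable def posRealAct {E F : Type*} [NormedAddCommGroup E] [NormedSpace ℝ E]
    [NormedAddCommGroup F] [NormedSpace ℝ F] (k : ℝ)
    (α : {a : ℝ // 0 < a}) (p : {v : E // v ≠ 0} × F) : {v : E // v ≠ 0} × F :=
  (⟨(α : ℝ) • (p.1 : E), smul_ne_zero (ne_of_gt α.2) p.1.2⟩, ((α : ℝ) ^ k) • p.2)

/-- The action `α · (v, w) = (α • v, α^k • w)` of the positive reals on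
`(E \ {0}) × F` is free, and the map `(α, p) ↦ (α · p, p)` is proper:
it is continuous and the preimage of every compact set is compact. -/
theorem posRealAct_free_and_proper
    {E F : Type*} [NormedAddCommGroup E] [NormedSpace ℝ E]
    [NormedAddCommGroup F] [NormedSpace ℝ F] (k : ℝ) :
    (∀ (α : {a : ℝ // 0 < a}) (p : {v : E // v ≠ 0} × F),
        posRealAct k α p = p → (α : ℝ) = 1) ∧
    Continuous (fun q : {a : ℝ // 0 < a} × ({v : E // v ≠ 0} × F) =>
        (posRealAct k q.1 q.2, q.2)) ∧
    (∀ K : Set (({v : E // v ≠ 0} × F) × ({v : E // v ≠ 0} × F)), IsCompact K →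
        IsCompact ((fun q : {a : ℝ // 0 < a} × ({v : E // v ≠ 0} × F) =>
          (posRealAct k q.1 q.2, q.2)) ⁻¹' K)) := by
  have hrpow : Continuous (fun α : {a : ℝ // 0 < a} => ((α : ℝ)) ^ k) := by
    rw [continuous_iff_continuousAt]
    intro α
    exact (Real.continuousAt_rpow_const _ _ (Or.inl (ne_of_gt α.2))).comp
      continuous_subtype_val.continuousAt
  have hcont : Continuous (fun q : {a : ℝ // 0 < a} × ({v : E // v ≠ 0} × F) =>
      (posRealAct k q.1 q.2, q.2)) := by
    unfold posRealAct
    refine Continuous.prodMk (Continuous.prodMk ?_ ?_) continuous_snd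
    · exact Continuous.subtype_mk
        ((continuous_subtype_val.comp continuous_fst).smul
          (continuous_subtype_val.comp (continuous_fst.comp continuous_snd))) _
    · exact (hrpow.comp continuous_fst).smul (continuous_snd.comp continuous_snd)
  refine ⟨?_, hcont, ?_⟩
  · rintro α ⟨⟨v, hv⟩, w⟩ h
    have h1 : (α : ℝ) • v = v := congrArg (fun z => (z.1 : E)) h
    have : ((α : ℝ) - 1) • v = 0 := by rw [sub_smul, one_smul, h1, sub_self]
    have := (smul_eq_zero.1 this).resolve_right hv
    linarith [sub_eq_zero.1 (by simpa using this)]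
  · intro K hK
    set f := (fun q : {a : ℝ // 0 < a} × ({v : E // v ≠ 0} × F) =>
          (posRealAct k q.1 q.2, q.2)) with hf
    rcases Set.eq_empty_or_nonempty K with rfl | hne
    · simpa using isCompact_empty
    -- norms of the E-components
    set n1 : (({v : E // v ≠ 0} × F) × ({v : E // v ≠ 0} × F)) → ℝ :=
      fun z => ‖(z.1.1 : E)‖ with hn1
    set n2 : (({v : E // v ≠ 0} × F) × ({v : E // v ≠ 0} × F)) → ℝ :=
      fun z => ‖(z.2.1 : E)‖ with hn2
    have hc1 : Continuous n1 :=
      (continuous_subtype_val.comp (continuous_fst.comp continuous_fst)).norm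
    have hc2 : Continuous n2 :=
      (continuous_subtype_val.comp (continuous_fst.comp continuous_snd)).norm
    obtain ⟨z1, hz1K, hz1⟩ := hK.exists_isMinOn hne hc1.continuousOn
    obtain ⟨z2, hz2K, hz2⟩ := hK.exists_isMaxOn hne hc1.continuousOn
    obtain ⟨z3, hz3K, hz3⟩ := hK.exists_isMinOn hne hc2.continuousOn
    obtain ⟨z4, hz4K, hz4⟩ := hK.exists_isMaxOn hne hc2.continuousOn
    set m1 := n1 z1; set M1 := n1 z2; set m2 := n2 z3; set M2 := n2 z4
    have hm1 : 0 < m1 := norm_pos_iff.2 z1.1.1.2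
    have hm2 : 0 < m2 := norm_pos_iff.2 z3.2.1.2
    have hM1 : 0 < M1 := norm_pos_iff.2 z2.1.1.2
    have hM2 : 0 < M2 := norm_pos_iff.2 z4.2.1.2
    set C : Set {a : ℝ // 0 < a} := Subtype.val ⁻¹' Set.Icc (m1 / M2) (M1 / m2) with hC
    have hCc : IsCompact C := by
      rw [Topology.IsEmbedding.subtypeVal.isCompact_iff, hC]
      have : Subtype.val '' (Subtype.val ⁻¹' Set.Icc (m1 / M2) (M1 / m2) : Set {a : ℝ // 0 < a})
          = Set.Icc (m1 / M2) (M1 / m2) := by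
        ext x
        constructor
        · rintro ⟨y, hy, rfl⟩; exact hy
        · intro hx; exact ⟨⟨x, lt_of_lt_of_le (div_pos hm1 hM2) hx.1⟩, hx, rfl⟩
      rw [this]
      exact isCompact_Icc
    have hK2 : IsCompact (Prod.snd '' K) := hK.image continuous_snd
    have hsub : f ⁻¹' K ⊆ C ×ˢ (Prod.snd '' K) := by
      rintro ⟨α, p⟩ hq
      have hqK : f (α, p) ∈ K := hq
      have hr : 0 < ‖(p.1 : E)‖ := norm_pos_iff.2 p.1.2
      have hαr : n1 (f (α, p)) = (α : ℝ) * ‖(p.1 : E)‖ := by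
        simp [hn1, hf, posRealAct, norm_smul, Real.norm_of_nonneg (le_of_lt α.2)]
      have hn2eq : n2 (f (α, p)) = ‖(p.1 : E)‖ := rfl
      have h1 : m1 ≤ (α : ℝ) * ‖(p.1 : E)‖ := hαr ▸ hz1 hqK
      have h2 : (α : ℝ) * ‖(p.1 : E)‖ ≤ M1 := hαr ▸ hz2 hqK
      have h3 : m2 ≤ ‖(p.1 : E)‖ := hn2eq ▸ hz3 hqK
      have h4 : ‖(p.1 : E)‖ ≤ M2 := hn2eq ▸ hz4 hqK
      constructor
      · refine ⟨?_, ?_⟩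
        · have := div_le_div₀ (mul_nonneg (le_of_lt α.2) hr.le) h1 hr h4
          rwa [mul_div_assoc, div_self hr.ne', mul_one] at this
        · have := div_le_div₀ hM1.le h2 hm2 h3
          rwa [mul_div_assoc, div_self hr.ne', mul_one] at this
      · exact ⟨f (α, p), hqK, rfl⟩
    exact (hCc.prod hK2).of_isClosed_subset (hK.isClosed.preimage hcont) hsub
end

section
/- Let E be a real normed vector space, let Q ⊆ E \ {0} be an open cone, let k ∈ ℝ, and let X : E → E be differentiable at every point of Q. Let C : E → E be the Liouville vector field C(v) = v. Then the Lie bracket satisfies (VectorField.lieBracket ℝ C X)(v) = k • X(v) for every v ∈ Q if and only if X(α • v) = α^(k+1) • X(v) for every v ∈ Q and every α > 0 (with α^(k+1) the real power). -/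
/-- A vector field `X`, differentiable at every point of an open cone
`Q ⊆ E \ {0}`, satisfies `[C, X] = k • X` on `Q` for the Liouville vector
field `C(v) = v` if and only if `X(α • v) = α^(k+1) • X(v)` for all `v ∈ Q`
and `α > 0` (with `α^(k+1)` the real power). -/
theorem lieBracket_liouville_eq_iff_homogeneous
    {E : Type*} [NormedAddCommGroup E] [NormedSpace ℝ E]
    (Q : Set E) (hQ0 : (0 : E) ∉ Q) (hQopen : IsOpen Q)
    (hQcone : ∀ v ∈ Q, ∀ α : ℝ, 0 < α → α • v ∈ Q)
    (k : ℝ) (X : E → E)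
    (hX : ∀ v ∈ Q, DifferentiableAt ℝ X v) :
    (∀ v ∈ Q, VectorField.lieBracket ℝ (fun w : E => w) X v = k • X v) ↔
      (∀ v ∈ Q, ∀ α : ℝ, 0 < α → X (α • v) = α ^ (k + 1) • X v) := by
  have hLB : ∀ v ∈ Q, VectorField.lieBracket ℝ (fun w : E => w) X v
      = fderiv ℝ X v v - X v := by
    intro v hv
    simp [VectorField.lieBracket, fderiv_id']
  constructor
  · intro h v hv α hα
    -- key: fderiv X w w = (k+1) • X w on Q
    have key : ∀ w ∈ Q, fderiv ℝ X w w = (k + 1) • X w := by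
      intro w hw
      have := h w hw
      rw [hLB w hw] at this
      have : fderiv ℝ X w w = k • X w + X w := by
        rw [← this]; abel
      rw [this, add_smul, one_smul]
    -- the rescaled function is constant on Ioi 0
    set f : ℝ → E := fun t => (t ^ (-(k + 1)) : ℝ) • X (t • v) with hf
    have hderiv : ∀ t ∈ Set.Ioi (0:ℝ), HasDerivAt f 0 t := by
      intro t ht
      have ht0 : (0:ℝ) < t := ht
      have htQ : t • v ∈ Q := hQcone v hv t ht0
      have h1 : HasDerivAt (fun s : ℝ => s • v) v t := by
        simpa using (hasDerivAt_id t).smul_const v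
      have h2 : HasDerivAt (fun s : ℝ => X (s • v)) (fderiv ℝ X (t • v) v) t :=
        ((hX _ htQ).hasFDerivAt).comp_hasDerivAt t h1
      have h3 : HasDerivAt (fun s : ℝ => s ^ (-(k + 1)))
          (-(k + 1) * t ^ (-(k + 1) - 1)) t :=
        Real.hasDerivAt_rpow_const (Or.inl ht0.ne')
      have h4 := h3.smul h2
      -- compute fderiv X (t•v) v
      have hkey : t • fderiv ℝ X (t • v) v = (k + 1) • X (t • v) := by
        have := key (t • v) htQ
        rw [← this, ← map_smul]
      have h5 : fderiv ℝ X (t • v) v = (t⁻¹ * (k + 1)) • X (t • v) := by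
        rw [mul_smul, ← hkey, ← mul_smul, inv_mul_cancel₀ ht0.ne', one_smul]
      have ht1 : t ^ (-(k + 1)) * t⁻¹ = t ^ (-(k + 1) - 1) := by
        rw [← Real.rpow_neg_one t, ← Real.rpow_add ht0]; ring_nf
      have hc : t ^ (-(k + 1)) * (t⁻¹ * (k + 1)) + -(k + 1) * t ^ (-(k + 1) - 1) = 0 := by
        rw [← mul_assoc, ht1]; ring
      have hcoef : (t ^ (-(k + 1)) : ℝ) • ((t⁻¹ * (k + 1)) • X (t • v))
          + (-(k + 1) * t ^ (-(k + 1) - 1)) • X (t • v) = 0 := by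
        rw [smul_smul, ← add_smul, hc, zero_smul]
      rw [h5, hcoef] at h4
      exact h4
    have hconst : f α = f 1 := by
      have := (convex_Ioi (0:ℝ)).norm_image_sub_le_of_norm_hasDerivWithin_le
        (f' := fun _ => (0:E)) (C := 0)
        (fun t ht => (hderiv t ht).hasDerivWithinAt)
        (fun t ht => by simp) (Set.mem_Ioi.2 one_pos) (Set.mem_Ioi.2 hα)
      have h0 : ‖f α - f 1‖ ≤ 0 := by simpa using this
      have := le_antisymm h0 (norm_nonneg _)
      rwa [norm_sub_eq_zero_iff] at this
    have hf1 : f 1 = X v := by simp [hf]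
    have hfα : (α ^ (-(k + 1)) : ℝ) • X (α • v) = X v := by
      rw [← hf1]; exact hconst
    have hαpos : (0:ℝ) < α ^ (k + 1) := Real.rpow_pos_of_pos hα _
    calc X (α • v) = (α ^ (k + 1) * α ^ (-(k + 1))) • X (α • v) := by
            rw [← Real.rpow_add hα]
            have : k + 1 + -(k + 1) = 0 := by ring
            rw [this, Real.rpow_zero, one_smul]
      _ = α ^ (k + 1) • ((α ^ (-(k + 1)) : ℝ) • X (α • v)) := by rw [mul_smul]
      _ = α ^ (k + 1) • X v := by rw [hfα]
  · intro h v hv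
    rw [hLB v hv]
    -- differentiate homogeneity at α = 1
    have h1 : HasDerivAt (fun s : ℝ => s • v) v 1 := by
      simpa using (hasDerivAt_id (1:ℝ)).smul_const v
    have h2 : HasDerivAt (fun s : ℝ => X (s • v)) (fderiv ℝ X v v) 1 := by
      have hfd : HasFDerivAt X (fderiv ℝ X v) ((1:ℝ) • v) := by
        simpa using (hX v hv).hasFDerivAt
      exact hfd.comp_hasDerivAt 1 h1
    have h3 : HasDerivAt (fun s : ℝ => (s ^ (k + 1) : ℝ) • X v) ((k + 1) • X v) 1 := by
      have := (Real.hasDerivAt_rpow_const (p := k + 1) (Or.inl one_ne_zero)).smul_const (X v)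
      simpa using this
    have heq : (fun s : ℝ => X (s • v)) =ᶠ[nhds (1:ℝ)] fun s => (s ^ (k + 1) : ℝ) • X v := by
      filter_upwards [Ioi_mem_nhds (show (0:ℝ) < 1 from one_pos)] with s hs
      exact h v hv s hs
    have h2' : HasDerivAt (fun s : ℝ => (s ^ (k + 1) : ℝ) • X v) (fderiv ℝ X v v) 1 :=
      h2.congr_of_eventuallyEq heq.symm
    have := h2'.unique h3
    rw [this, add_smul, one_smul]
    abel
end

section
/- Let E and F be real vector spaces and k ∈ ℝ. Let S₁ be the setoid on E \ {0} given by v ∼ w ↔ ∃ α > 0, w = α • v, with quotient map q, and let S₂ be the setoid on (E \ {0}) × F given by (v, w) ∼ (v′, w′) ↔ ∃ α > 0, v′ = α • v ∧ w′ = α^k • w (with α^k the real power). Let Π : Quotient S₂ → Quotient S₁ be the map induced by the first projection (which is well defined). Let Q ⊆ E \ {0} be a cone and Q⁺ := q(Q). Then the assignment f ↦ γ_f, where γ_f(q(v)) := ⟦(v, f(v))⟧ for v ∈ Q, is a well-defined bijection from the set of positively k-homogeneous maps {f : Q → F | ∀ v ∈ Q, ∀ α > 0, f(α • v) = α^k •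 f(v)} onto the set of sections {γ : Q⁺ → Quotient S₂ | ∀ p ∈ Q⁺, Π(γ(p)) = p}. -/
/-- The ray equivalence on `E \ {0}`: `v ∼ w ↔ ∃ α > 0, w = α • v`. -/
def raySetoid (E : Type*) [AddCommGroup E] [Module ℝ E] : Setoid {v : E // v ≠ 0} where
  r v w := ∃ α : ℝ, 0 < α ∧ (w : E) = α • (v : E)
  iseqv := by
    refine ⟨fun v => ⟨1, one_pos, (one_smul ℝ (v : E)).symm⟩, ?_, ?_⟩
    · rintro v w ⟨α, hα, h⟩
      exact ⟨α⁻¹, inv_pos.mpr hα, by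
        rw [h, smul_smul, inv_mul_cancel₀ hα.ne', one_smul]⟩
    · rintro u v w ⟨α, hα, h1⟩ ⟨β, hβ, h2⟩
      exact ⟨β * α, mul_pos hβ hα, by rw [h2, h1, smul_smul]⟩

/-- The equivalence on `(E \ {0}) × F`:
`(v, w) ∼ (v′, w′) ↔ ∃ α > 0, v′ = α • v ∧ w′ = α^k • w` (real power `α^k`). -/
def rayHomSetoid (E F : Type*) [AddCommGroup E] [Module ℝ E]
    [AddCommGroup F] [Module ℝ F] (k : ℝ) : Setoid ({v : E // v ≠ 0} × F) where
  r p q := ∃ α : ℝ, 0 < α ∧ (q.1 : E) = α • (p.1 : E) ∧ q.2 = α ^ k • p.2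
  iseqv := by
    refine ⟨fun p => ⟨1, one_pos, (one_smul ℝ _).symm, by
      rw [Real.one_rpow, one_smul]⟩, ?_, ?_⟩
    · rintro p q ⟨α, hα, h1, h2⟩
      refine ⟨α⁻¹, inv_pos.mpr hα, ?_, ?_⟩
      · rw [h1, smul_smul, inv_mul_cancel₀ hα.ne', one_smul]
      · rw [h2, smul_smul, Real.inv_rpow hα.le,
          inv_mul_cancel₀ (Real.rpow_pos_of_pos hα k).ne', one_smul]
    · rintro p q r ⟨α, hα, h1, h2⟩ ⟨β, hβ, g1, g2⟩
      refine ⟨β * α, mul_pos hβ hα, ?_, ?_⟩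
      · rw [g1, h1, smul_smul]
      · rw [g2, h2, smul_smul, Real.mul_rpow hβ.le hα.le]

/-- The map `Π : ((E \ {0}) × F)/∼ → (E \ {0})/∼` induced by the first
projection; it is well defined. -/
def projQuot (E F : Type*) [AddCommGroup E] [Module ℝ E]
    [AddCommGroup F] [Module ℝ F] (k : ℝ) :
    Quotient (rayHomSetoid E F k) → Quotient (raySetoid E) :=
  Quotient.lift (fun p : {v : E // v ≠ 0} × F => Quotient.mk (raySetoid E) p.1)
    (by
      rintro p q ⟨α, hα, h1, -⟩
      exact Quotient.sound ⟨α, hα, h1⟩)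

private lemma smul_cancel_aux {E : Type*} [AddCommGroup E] [Module ℝ E]
    {v : E} (hv : v ≠ 0) {α β : ℝ} (h : α • v = β • v) : α = β := by
  by_contra hne
  have h0 : (α - β) • v = 0 := by rw [sub_smul, h, sub_self]
  have h2 : v = (α - β)⁻¹ • ((α - β) • v) := by
    rw [smul_smul, inv_mul_cancel₀ (sub_ne_zero.mpr hne), one_smul]
  rw [h0, smul_zero] at h2
  exact hv h2

/-- Positively `k`-homogeneous maps `f : Q → F` on a cone `Q ⊆ E \ {0}` are in
one-to-one correspondence, via `f ↦ γ_f` with `γ_f(q v) = ⟦(v, f v)⟧`, with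
sections `γ : Q⁺ → ((E \ {0}) × F)/∼` of `Π` over `Q⁺ = q(Q)`. -/
theorem homogeneous_maps_correspond_to_sections
    {E F : Type*} [AddCommGroup E] [Module ℝ E] [AddCommGroup F] [Module ℝ F]
    (k : ℝ) (Q : Set {v : E // v ≠ 0})
    (hQcone : ∀ v ∈ Q, ∀ α : ℝ, 0 < α →
      ∀ w : {v : E // v ≠ 0}, (w : E) = α • (v : E) → w ∈ Q) :
    (∀ f ∈ {f : ↥Q → F | ∀ (v w : ↥Q) (α : ℝ), 0 < α →
        ((w : {v : E // v ≠ 0}) : E) = α • ((v : {v : E // v ≠ 0}) : E) →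
        f w = α ^ k • f v},
      ∃! γ : ↥(Quotient.mk (raySetoid E) '' Q) → Quotient (rayHomSetoid E F k),
        γ ∈ {γ | ∀ p : ↥(Quotient.mk (raySetoid E) '' Q),
            projQuot E F k (γ p) = (p : Quotient (raySetoid E))} ∧
        ∀ (v : {v : E // v ≠ 0}) (hv : v ∈ Q),
          γ ⟨Quotient.mk (raySetoid E) v, ⟨v, hv, rfl⟩⟩ =
            Quotient.mk (rayHomSetoid E F k) (v, f ⟨v, hv⟩)) ∧
    (∀ γ ∈ {γ : ↥(Quotient.mk (raySetoid E) '' Q) → Quotient (rayHomSetoid E F k) |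
        ∀ p : ↥(Quotient.mk (raySetoid E) '' Q),
          projQuot E F k (γ p) = (p : Quotient (raySetoid E))},
      ∃! f : ↥Q → F,
        f ∈ {f : ↥Q → F | ∀ (v w : ↥Q) (α : ℝ), 0 < α →
            ((w : {v : E // v ≠ 0}) : E) = α • ((v : {v : E // v ≠ 0}) : E) →
            f w = α ^ k • f v} ∧
        ∀ (v : {v : E // v ≠ 0}) (hv : v ∈ Q),
          γ ⟨Quotient.mk (raySetoid E) v, ⟨v, hv, rfl⟩⟩ =
            Quotient.mk (rayHomSetoid E F k) (v, f ⟨v, hv⟩)) := by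
  classical
  constructor
  · -- from homogeneous f to section γ
    intro f hf
    have key : ∀ (v w : {v : E // v ≠ 0}) (hv : v ∈ Q) (hw : w ∈ Q),
        Quotient.mk (raySetoid E) v = Quotient.mk (raySetoid E) w →
        Quotient.mk (rayHomSetoid E F k) (v, f ⟨v, hv⟩)
          = Quotient.mk (rayHomSetoid E F k) (w, f ⟨w, hw⟩) := by
      intro v w hv hw h
      obtain ⟨α, hα, hvw⟩ := Quotient.exact h
      exact Quotient.sound ⟨α, hα, hvw, hf ⟨v, hv⟩ ⟨w, hw⟩ α hα hvw⟩
    refine ⟨fun p => Quotient.mk (rayHomSetoid E F k)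
        (p.2.choose, f ⟨p.2.choose, p.2.choose_spec.1⟩), ⟨?_, ?_⟩, ?_⟩
    · intro p
      exact p.2.choose_spec.2
    · intro v hv
      have h := (⟨v, hv, rfl⟩ :
        Quotient.mk (raySetoid E) v ∈ Quotient.mk (raySetoid E) '' Q).choose_spec
      exact key _ v h.1 hv h.2
    · rintro γ' ⟨hsec', hval'⟩
      funext p
      obtain ⟨pv, hp2⟩ := p
      obtain ⟨v, hv, hq⟩ := id hp2
      subst hq
      have h := hp2.choose_spec
      exact (hval' v hv).trans (key v hp2.choose hv h.1 h.2.symm)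
  · -- from section γ to homogeneous f
    intro γ hγ
    have exu : ∀ (v : {v : E // v ≠ 0}) (hv : v ∈ Q), ∃! y : F,
        γ ⟨Quotient.mk (raySetoid E) v, ⟨v, hv, rfl⟩⟩
          = Quotient.mk (rayHomSetoid E F k) (v, y) := by
      intro v hv
      obtain ⟨⟨w, y⟩, hw⟩ :=
        Quotient.exists_rep (γ ⟨Quotient.mk (raySetoid E) v, ⟨v, hv, rfl⟩⟩)
      have hs : Quotient.mk (raySetoid E) w = Quotient.mk (raySetoid E) v := by
        have h := hγ ⟨Quotient.mk (raySetoid E) v, ⟨v, hv, rfl⟩⟩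
        rw [← hw] at h
        exact h
      obtain ⟨α, hα, hv'⟩ := Quotient.exact hs
      have hkey : γ ⟨Quotient.mk (raySetoid E) v, ⟨v, hv, rfl⟩⟩
          = Quotient.mk (rayHomSetoid E F k) (v, α ^ k • y) :=
        hw.symm.trans (Quotient.sound ⟨α, hα, hv', rfl⟩)
      refine ⟨α ^ k • y, hkey, ?_⟩
      intro y' hy'
      obtain ⟨β, hβ, hb1, hb2⟩ := Quotient.exact (hkey.symm.trans hy')
      have hb1' : (1 : ℝ) • (v : E) = β • (v : E) := by
        rw [one_smul]; exact hb1
      have hβ1 : β = 1 := (smul_cancel_aux v.2 hb1').symm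
      have hb2' : y' = β ^ k • (α ^ k • y) := hb2
      rw [hb2', hβ1, Real.one_rpow, one_smul]
    refine ⟨fun u => (exu u.1 u.2).choose, ⟨?_, fun v hv => (exu v hv).choose_spec.1⟩, ?_⟩
    · -- homogeneity
      intro u w α hα hrel
      have hray : Quotient.mk (raySetoid E) (u : {v : E // v ≠ 0})
          = Quotient.mk (raySetoid E) (w : {v : E // v ≠ 0}) :=
        Quotient.sound ⟨α, hα, hrel⟩
      have hpt : (⟨Quotient.mk (raySetoid E) (u : {v : E // v ≠ 0}), ⟨u.1, u.2, rfl⟩⟩ :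
            ↥(Quotient.mk (raySetoid E) '' Q))
          = ⟨Quotient.mk (raySetoid E) (w : {v : E // v ≠ 0}), ⟨w.1, w.2, rfl⟩⟩ :=
        Subtype.ext hray
      have h1 := (exu u.1 u.2).choose_spec.1
      have h2 := (exu w.1 w.2).choose_spec.1
      obtain ⟨β, hβ, hb1, hb2⟩ :=
        Quotient.exact ((h1.symm.trans (congrArg γ hpt)).trans h2)
      have hb1' : ((w : {v : E // v ≠ 0}) : E) = β • ((u : {v : E // v ≠ 0}) : E) := hb1
      have hβα : β = α := smul_cancel_aux u.1.2 (hb1'.symm.trans hrel)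
      show (exu w.1 w.2).choose = α ^ k • (exu u.1 u.2).choose
      have hb2' : (exu w.1 w.2).choose = β ^ k • (exu u.1 u.2).choose := hb2
      rw [hb2', hβα]
    · -- uniqueness
      rintro f' ⟨hf'hom, hf'val⟩
      funext u
      exact (exu u.1 u.2).unique (hf'val u.1 u.2) (exu u.1 u.2).choose_spec.1
end
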